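/- arXiv:1606.02158 — 4 statements merged into one kernel-verified Lean document; each statement's English description precedes it below -/
import Mathlib

section
/- Let f : ℝ^N → [0,∞) be measurable with ∫_{ℝ^N} f > 0 and α ∈ (0,N). Then there exists c > 0 such that for all x with |x| ≥ 1, (I_α ∗ f)(x) ≥ c |x|^{-(N-α)}. That is, the Riesz potential of a nontrivial nonnegative function cannot decay faster than I_α at infinity. -/
open MeasureTheory ENNReal

/-- The normalisation constant `A_α` of the Riesz potential on `ℝ^N`. -/
noncomputable def rieszConst (N : ℕ) (α : ℝ) : ℝ :=
  Real.Gamma (((N : ℝ) - α) / 2) / (Real.Gamma (α / 2) * Real.pi ^ ((N : ℝ) / 2) * 2 ^ α)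

/-- The Riesz potential `I_α ∗ f` of a function, as a `[0,∞]`-valued integral. -/
noncomputable def rieszConv (N : ℕ) (α : ℝ) (f : EuclideanSpace ℝ (Fin N) → ℝ)
    (x : EuclideanSpace ℝ (Fin N)) : ℝ≥0∞ :=
  ∫⁻ y, ENNReal.ofReal (rieszConst N α * f y / ‖x - y‖ ^ ((N : ℝ) - α))

/-- If `f ≥ 0` is measurable with `∫ f > 0` and `α ∈ (0,N)`, then there is `c > 0` with
`(I_α ∗ f)(x) ≥ c |x|^{-(N-α)}` for all `|x| ≥ 1`: the Riesz potential of a nontrivial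
nonnegative function cannot decay faster than `I_α` at infinity. -/
theorem stmt6 (N : ℕ) (hN : 1 ≤ N) (α : ℝ) (hα : 0 < α) (hαN : α < N)
    (f : EuclideanSpace ℝ (Fin N) → ℝ) (hmeas : Measurable f) (hf0 : ∀ x, 0 ≤ f x)
    (hpos : 0 < ∫⁻ y, ENNReal.ofReal (f y)) :
    ∃ c : ℝ, 0 < c ∧ ∀ x : EuclideanSpace ℝ (Fin N), 1 ≤ ‖x‖ →
      ENNReal.ofReal (c * ‖x‖ ^ (-((N : ℝ) - α))) ≤ rieszConv N α f x := by
  classical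
  haveI : Nontrivial (EuclideanSpace ℝ (Fin N)) :=
    ⟨0, EuclideanSpace.single ⟨0, hN⟩ (1:ℝ), by
      intro h
      have := congrArg norm h
      simp [EuclideanSpace.norm_single] at this⟩
  set β : ℝ := (N : ℝ) - α with hβdef
  have hβ : 0 < β := by simp only [hβdef]; linarith
  set K := rieszConst N α with hKdef
  have hK : 0 < K := by
    rw [hKdef]
    unfold rieszConst
    apply div_pos
    · exact Real.Gamma_pos_of_pos (by positivity)
    · have h1 := Real.Gamma_pos_of_pos (show (0:ℝ) < α/2 by positivity)
      have h2 : (0:ℝ) < Real.pi ^ ((N:ℝ)/2) := Real.rpow_pos_of_pos Real.pi_pos _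
      have h3 : (0:ℝ) < (2:ℝ) ^ α := Real.rpow_pos_of_pos (by norm_num) _
      positivity
  set S : ℕ → Set (EuclideanSpace ℝ (Fin N)) :=
    fun n => Metric.closedBall 0 n ∩ {y | f y ≤ n} with hSdef
  have hSmeas : ∀ n, MeasurableSet (S n) := fun n =>
    (measurableSet_closedBall).inter (hmeas measurableSet_Iic)
  set F : ℕ → EuclideanSpace ℝ (Fin N) → ℝ≥0∞ :=
    fun n => (S n).indicator (fun y => ENNReal.ofReal (f y)) with hFdef
  have hFmeas : ∀ n, Measurable (F n) := fun n =>
    (Measurable.ennreal_ofReal hmeas).indicator (hSmeas n)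
  have hSmono : Monotone S := by
    intro m n hmn
    apply Set.inter_subset_inter
    · exact Metric.closedBall_subset_closedBall (by exact_mod_cast hmn)
    · intro y hy
      simp only [Set.mem_setOf_eq] at hy ⊢
      exact hy.trans (by exact_mod_cast hmn)
  have hFmono : Monotone F := fun m n hmn y => by
    by_cases hy : y ∈ S m
    · simp only [hFdef, Set.indicator_of_mem hy, Set.indicator_of_mem (hSmono hmn hy)]
      exact le_rfl
    · simp [hFdef, Set.indicator_of_notMem hy]
  have hFsup : ∀ y, (⨆ n, F n y) = ENNReal.ofReal (f y) := by
    intro y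
    apply le_antisymm
    · exact iSup_le fun n => Set.indicator_le_self _ _ y
    · obtain ⟨n, hn1, hn2⟩ : ∃ n : ℕ, ‖y‖ ≤ n ∧ f y ≤ n := by
        obtain ⟨n, hn⟩ := exists_nat_ge (max ‖y‖ (f y))
        exact ⟨n, (le_max_left _ _).trans hn, (le_max_right _ _).trans hn⟩
      have hy : y ∈ S n := ⟨by simpa [Metric.mem_closedBall, dist_zero_right] using hn1, hn2⟩
      calc ENNReal.ofReal (f y) = F n y := by rw [hFdef]; simp [Set.indicator_of_mem hy]
        _ ≤ ⨆ n, F n y := le_iSup (fun k => F k y) n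
  have hsup : (⨆ n, ∫⁻ y, F n y) = ∫⁻ y, ENNReal.ofReal (f y) := by
    rw [← lintegral_iSup hFmeas hFmono]
    congr 1; ext y; exact hFsup y
  obtain ⟨n, hn⟩ : ∃ n, 0 < ∫⁻ y, F n y := by
    by_contra h
    push_neg at h
    simp only [nonpos_iff_eq_zero] at h
    rw [← hsup] at hpos
    simp [h] at hpos
  have hfin : (∫⁻ y, F n y) < ⊤ := by
    calc (∫⁻ y, F n y) ≤ ∫⁻ y, (S n).indicator (fun _ => (n : ℝ≥0∞)) y := by
          apply lintegral_mono
          intro y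
          by_cases hy : y ∈ S n
          · simp only [hFdef, Set.indicator_of_mem hy]
            exact ENNReal.ofReal_le_of_le_toReal (by simpa using hy.2)
          · simp [hFdef, Set.indicator_of_notMem hy]
      _ = n * volume (S n) := by rw [lintegral_indicator_const (hSmeas n)]
      _ ≤ n * volume (Metric.closedBall (0:EuclideanSpace ℝ (Fin N)) n) := by
          gcongr; exact Set.inter_subset_left
      _ < ⊤ := ENNReal.mul_lt_top (by simp) measure_closedBall_lt_top
  set M := ∫⁻ y, F n y with hMdef
  have hMt : 0 < M.toReal := ENNReal.toReal_pos hn.ne' hfin.ne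
  refine ⟨K * (1 + n) ^ (-β) * M.toReal, by positivity, ?_⟩
  intro x hx
  have hxpos : (0:ℝ) < ‖x‖ := lt_of_lt_of_le one_pos hx
  set D : ℝ := (1 + n) * ‖x‖ with hDdef
  have hD : 0 < D := by positivity
  have hDβ : 0 < D ^ β := Real.rpow_pos_of_pos hD _
  have hnex : ∀ᵐ y : EuclideanSpace ℝ (Fin N), y ≠ x := by
    refine ae_iff.mpr ?_
    simpa using measure_singleton (x : EuclideanSpace ℝ (Fin N))
  have hae : ∀ᵐ y, ENNReal.ofReal (K / D ^ β) * F n y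
      ≤ ENNReal.ofReal (K * f y / ‖x - y‖ ^ β) := by
    filter_upwards [hnex] with y hy
    by_cases hyS : y ∈ S n
    · have hxy : (0:ℝ) < ‖x - y‖ := by
        rw [norm_pos_iff]
        exact sub_ne_zero.mpr (fun h => hy (by rw [← sub_eq_zero]; rw [h] at *; simpa using h.symm ▸ rfl))
      have hyn : ‖y‖ ≤ n := by simpa [Metric.mem_closedBall, dist_zero_right] using hyS.1
      have hle : ‖x - y‖ ≤ D := by
        calc ‖x - y‖ ≤ ‖x‖ + ‖y‖ := norm_sub_le _ _
          _ ≤ ‖x‖ + n * ‖x‖ := by nlinarith [hyn, hx, norm_nonneg y]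
          _ = D := by rw [hDdef]; ring
      have hrpow : ‖x - y‖ ^ β ≤ D ^ β := Real.rpow_le_rpow hxy.le hle hβ.le
      have hreal : K * f y / D ^ β ≤ K * f y / ‖x - y‖ ^ β :=
        div_le_div_of_nonneg_left (mul_nonneg hK.le (hf0 y)) (Real.rpow_pos_of_pos hxy _) hrpow
      rw [hFdef]
      simp only [Set.indicator_of_mem hyS]
      rw [← ENNReal.ofReal_mul (by positivity)]
      refine le_trans (le_of_eq ?_) (ENNReal.ofReal_le_ofReal hreal)
      congr 1
      ring
    · simp [hFdef, Set.indicator_of_notMem hyS]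
  have hlin : ENNReal.ofReal (K / D ^ β) * M ≤ rieszConv N α f x := by
    rw [hMdef, ← lintegral_const_mul _ (hFmeas n)]
    exact lintegral_mono_ae hae
  refine le_trans (le_of_eq ?_) hlin
  have hMeq : M = ENNReal.ofReal M.toReal := (ENNReal.ofReal_toReal hfin.ne).symm
  rw [hMeq, ← ENNReal.ofReal_mul (by positivity)]
  congr 1
  have hmul : D ^ β = (1 + n) ^ β * ‖x‖ ^ β := Real.mul_rpow (by positivity) hxpos.le
  have h1 : (1 + (n:ℝ)) ^ (-β) = ((1 + (n:ℝ)) ^ β)⁻¹ := Real.rpow_neg (by positivity) β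
  have h2 : ‖x‖ ^ (-β) = (‖x‖ ^ β)⁻¹ := Real.rpow_neg hxpos.le β
  have hb1 : (0:ℝ) < (1 + (n:ℝ)) ^ β := Real.rpow_pos_of_pos (by positivity) _
  have hb2 : (0:ℝ) < ‖x‖ ^ β := Real.rpow_pos_of_pos hxpos _
  rw [h1, h2, hmul]
  field_simp
  exact ENNReal.toReal_ofReal ENNReal.toReal_nonneg
end

section
/- Let f : ℝ^N → [0,∞) be measurable with sup_{x} f(x)(1+|x|)^γ < ∞ for some γ > N, and let α ∈ (0,N). Then limsup_{|x|→∞} (I_α ∗ f)(x) |x|^{N-α} < ∞. -/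
open MeasureTheory ENNReal Filter Metric Set Module

section Aux

variable {E : Type*} [NormedAddCommGroup E] [NormedSpace ℝ E] [MeasurableSpace E]
  [BorelSpace E] [FiniteDimensional ℝ E] (μ : Measure E) [μ.IsAddHaarMeasure]

/-- Finiteness of the integral of `‖z‖^(-p)` over the unit ball, for `p < dim`. -/
lemma aux_kernel_finite {p : ℝ} (hp0 : 0 < p) (hpN : p < (finrank ℝ E : ℝ)) :
    ∫⁻ z in closedBall (0 : E) 1, ENNReal.ofReal (‖z‖ ^ (-p)) ∂μ < ⊤ := by
  have hfinpos : 0 < finrank ℝ E := by exact_mod_cast hp0.trans hpN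
  haveI : Nontrivial E := nontrivial_of_finrank_pos hfinpos
  have hmeas : Measurable fun z : E => ‖z‖ ^ (-p) := by fun_prop
  have hsetm : ∀ t : ℝ, MeasurableSet {a : E | t < ‖a‖ ^ (-p)} := fun t =>
    measurableSet_lt measurable_const hmeas
  rw [lintegral_eq_lintegral_meas_lt _ (Eventually.of_forall fun z =>
    Real.rpow_nonneg (norm_nonneg z) _) hmeas.aemeasurable]
  set q : ℝ := (finrank ℝ E : ℝ) / p with hq
  have hq1 : -q < -1 := by
    rw [neg_lt_neg_iff, hq, lt_div_iff₀ hp0, one_mul]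
    exact hpN
  have key : ∀ t ∈ Ioi (1 : ℝ),
      (μ.restrict (closedBall (0 : E) 1)) {a : E | t < ‖a‖ ^ (-p)}
        ≤ ENNReal.ofReal (t ^ (-q)) * μ (ball (0 : E) 1) := by
    intro t ht
    have ht0 : (0 : ℝ) < t := lt_trans one_pos ht
    have hsub : {a : E | t < ‖a‖ ^ (-p)} ⊆ ball (0 : E) (t ^ (-p)⁻¹) := by
      intro z hz
      have hz0 : z ≠ 0 := by
        rintro rfl
        simp only [mem_setOf_eq, norm_zero] at hz
        rw [Real.zero_rpow (neg_ne_zero.2 hp0.ne')] at hz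
        linarith
      have hnz : 0 < ‖z‖ := norm_pos_iff.2 hz0
      have := (Real.lt_rpow_inv_iff_of_neg hnz ht0 (neg_neg_of_pos hp0)).2 hz
      simpa [mem_ball, dist_zero_right] using this
    calc (μ.restrict (closedBall (0 : E) 1)) {a : E | t < ‖a‖ ^ (-p)}
        ≤ μ (ball (0 : E) (t ^ (-p)⁻¹)) := by
          rw [Measure.restrict_apply (hsetm t)]
          exact measure_mono (Set.inter_subset_left.trans hsub)
      _ = ENNReal.ofReal ((t ^ (-p)⁻¹) ^ finrank ℝ E) * μ (ball (0 : E) 1) :=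
          Measure.addHaar_ball μ _ (Real.rpow_nonneg ht0.le _)
      _ = ENNReal.ofReal (t ^ (-q)) * μ (ball (0 : E) 1) := by
          congr 2
          rw [← Real.rpow_natCast (t ^ (-p)⁻¹) (finrank ℝ E), ← Real.rpow_mul ht0.le]
          congr 1
          rw [hq]
          field_simp
  have hsplit : Ioi (0 : ℝ) = Ioc (0 : ℝ) 1 ∪ Ioi (1 : ℝ) := (Ioc_union_Ioi_eq_Ioi zero_le_one).symm
  rw [hsplit]
  refine lt_of_le_of_lt (lintegral_union_le _ _ _) ?_
  rw [ENNReal.add_lt_top]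
  constructor
  · have hb : ∀ t ∈ Ioc (0 : ℝ) 1,
        (μ.restrict (closedBall (0 : E) 1)) {a : E | t < ‖a‖ ^ (-p)}
          ≤ μ (closedBall (0 : E) 1) := by
      intro t _
      rw [Measure.restrict_apply (hsetm t)]
      exact measure_mono Set.inter_subset_right
    refine lt_of_le_of_lt
      (setLIntegral_mono' (g := fun _ => μ (closedBall (0 : E) 1)) measurableSet_Ioc hb) ?_
    rw [setLIntegral_const]
    refine ENNReal.mul_lt_top measure_closedBall_lt_top ?_
    rw [Real.volume_Ioc]
    exact ENNReal.ofReal_lt_top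
  · refine lt_of_le_of_lt (setLIntegral_mono' measurableSet_Ioi key) ?_
    rw [lintegral_mul_const' _ _ measure_ball_lt_top.ne]
    refine ENNReal.mul_lt_top ?_ measure_ball_lt_top
    have hint : IntegrableOn (fun t : ℝ => t ^ (-q)) (Ioi 1) := by
      exact integrableOn_Ioi_rpow_of_lt hq1 one_pos
    refine lt_of_le_of_lt (lintegral_mono fun t => ?_) hint.2
    exact Real.ofReal_le_enorm _

/-- Scaling identity for the integral of `‖z‖^(-p)` over balls. -/
lemma aux_kernel_scaling (p : ℝ) {R : ℝ} (hR : 0 < R) :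
    ∫⁻ z in closedBall (0 : E) R, ENNReal.ofReal (‖z‖ ^ (-p)) ∂μ
      = ENNReal.ofReal (R ^ ((finrank ℝ E : ℝ) - p)) *
        ∫⁻ z in closedBall (0 : E) 1, ENNReal.ofReal (‖z‖ ^ (-p)) ∂μ := by
  have hmeasR : Measurable fun z : E => ‖z‖ ^ (-p) := by fun_prop
  have hmeas : Measurable fun z : E => ENNReal.ofReal (‖z‖ ^ (-p)) := hmeasR.ennreal_ofReal
  set g : E → ℝ≥0∞ := (closedBall (0 : E) R).indicator (fun z => ENNReal.ofReal (‖z‖ ^ (-p)))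
    with hgdef
  have hgm : Measurable g := hmeas.indicator measurableSet_closedBall
  have h1 : ∫⁻ w, g (R • w) ∂μ = ENNReal.ofReal (|((R : ℝ) ^ finrank ℝ E)⁻¹|) * ∫⁻ z, g z ∂μ := by
    rw [← lintegral_map hgm (measurable_const_smul R), Measure.map_addHaar_smul μ hR.ne',
      lintegral_smul_measure, smul_eq_mul]
  have h2 : ∀ w : E, g (R • w)
      = (closedBall (0 : E) 1).indicator
          (fun w => ENNReal.ofReal (R ^ (-p)) * ENNReal.ofReal (‖w‖ ^ (-p))) w := by
    intro w
    have hval : ‖R • w‖ ^ (-p) = R ^ (-p) * ‖w‖ ^ (-p) := by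
      rw [norm_smul, Real.norm_eq_abs, abs_of_pos hR, Real.mul_rpow hR.le (norm_nonneg w)]
    have hmem : (R • w ∈ closedBall (0 : E) R) ↔ (w ∈ closedBall (0 : E) 1) := by
      simp only [mem_closedBall, dist_zero_right, norm_smul, Real.norm_eq_abs, abs_of_pos hR]
      exact mul_le_iff_le_one_right hR
    by_cases hw : w ∈ closedBall (0 : E) 1
    · rw [hgdef]
      simp only [Set.indicator_of_mem (hmem.mpr hw), Set.indicator_of_mem hw, hval,
        ENNReal.ofReal_mul (Real.rpow_nonneg hR.le _)]
    · rw [hgdef]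
      simp only [Set.indicator_of_notMem (fun h => hw (hmem.mp h)),
        Set.indicator_of_notMem hw]
  have h3 : ∫⁻ w, g (R • w) ∂μ
      = ENNReal.ofReal (R ^ (-p)) * ∫⁻ z in closedBall (0 : E) 1,
          ENNReal.ofReal (‖z‖ ^ (-p)) ∂μ := by
    simp_rw [h2]
    rw [lintegral_indicator measurableSet_closedBall, lintegral_const_mul' _ _ ENNReal.ofReal_ne_top]
  have h4 : ∫⁻ z, g z ∂μ = ∫⁻ z in closedBall (0 : E) R, ENNReal.ofReal (‖z‖ ^ (-p)) ∂μ :=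
    lintegral_indicator measurableSet_closedBall _
  have hRn : (0 : ℝ) < R ^ finrank ℝ E := pow_pos hR _
  have h5 : ENNReal.ofReal (R ^ (-p)) *
      (∫⁻ z in closedBall (0 : E) 1, ENNReal.ofReal (‖z‖ ^ (-p)) ∂μ)
      = ENNReal.ofReal ((R ^ finrank ℝ E)⁻¹) *
        ∫⁻ z in closedBall (0 : E) R, ENNReal.ofReal (‖z‖ ^ (-p)) ∂μ := by
    rw [← h3, ← h4, h1, abs_of_pos (inv_pos.2 hRn)]
  calc ∫⁻ z in closedBall (0 : E) R, ENNReal.ofReal (‖z‖ ^ (-p)) ∂μ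
      = ENNReal.ofReal (R ^ finrank ℝ E * (R ^ finrank ℝ E)⁻¹) *
        ∫⁻ z in closedBall (0 : E) R, ENNReal.ofReal (‖z‖ ^ (-p)) ∂μ := by
        rw [mul_inv_cancel₀ hRn.ne', ENNReal.ofReal_one, one_mul]
    _ = ENNReal.ofReal (R ^ finrank ℝ E) * (ENNReal.ofReal ((R ^ finrank ℝ E)⁻¹) *
        ∫⁻ z in closedBall (0 : E) R, ENNReal.ofReal (‖z‖ ^ (-p)) ∂μ) := by
        rw [ENNReal.ofReal_mul (le_of_lt hRn), mul_assoc]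
    _ = ENNReal.ofReal (R ^ finrank ℝ E) * (ENNReal.ofReal (R ^ (-p)) *
        ∫⁻ z in closedBall (0 : E) 1, ENNReal.ofReal (‖z‖ ^ (-p)) ∂μ) := by rw [← h5]
    _ = ENNReal.ofReal (R ^ ((finrank ℝ E : ℝ) - p)) *
        ∫⁻ z in closedBall (0 : E) 1, ENNReal.ofReal (‖z‖ ^ (-p)) ∂μ := by
        rw [← mul_assoc, ← ENNReal.ofReal_mul (le_of_lt hRn),
          ← Real.rpow_natCast R (finrank ℝ E), ← Real.rpow_add hR, ← sub_eq_add_neg]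

/-- Translation identity. -/
lemma aux_kernel_translate (p : ℝ) (x : E) (R : ℝ) :
    ∫⁻ y in closedBall x R, ENNReal.ofReal (‖x - y‖ ^ (-p)) ∂μ
      = ∫⁻ z in closedBall (0 : E) R, ENNReal.ofReal (‖z‖ ^ (-p)) ∂μ := by
  set h : E → ℝ≥0∞ := (closedBall (0 : E) R).indicator (fun z => ENNReal.ofReal (‖z‖ ^ (-p)))
    with hhdef
  have h0 : ∀ y : E, (closedBall x R).indicator
      (fun y => ENNReal.ofReal (‖x - y‖ ^ (-p))) y = h (y - x) := by
    intro y
    have hmem : y ∈ closedBall x R ↔ (y - x) ∈ closedBall (0 : E) R := by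
      simp [mem_closedBall, dist_eq_norm]
    have hval : ‖x - y‖ ^ (-p) = ‖y - x‖ ^ (-p) := by rw [norm_sub_rev]
    by_cases hy : y ∈ closedBall x R
    · rw [Set.indicator_of_mem hy, hhdef]
      rw [Set.indicator_of_mem (hmem.mp hy)]
      rw [hval]
    · rw [Set.indicator_of_notMem hy, hhdef,
        Set.indicator_of_notMem (fun hc => hy (hmem.mpr hc))]
  calc ∫⁻ y in closedBall x R, ENNReal.ofReal (‖x - y‖ ^ (-p)) ∂μ
      = ∫⁻ y, (closedBall x R).indicator (fun y => ENNReal.ofReal (‖x - y‖ ^ (-p))) y ∂μ :=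
        (lintegral_indicator measurableSet_closedBall _).symm
    _ = ∫⁻ y, h (y + -x) ∂μ := by simp_rw [h0, sub_eq_add_neg]
    _ = ∫⁻ y, h y ∂μ := lintegral_add_right_eq_self h (-x)
    _ = ∫⁻ z in closedBall (0 : E) R, ENNReal.ofReal (‖z‖ ^ (-p)) ∂μ :=
        lintegral_indicator measurableSet_closedBall _

end Aux

/-- If `f ≥ 0` satisfies `sup_x f(x)(1+|x|)^γ < ∞` with `γ > N` and `α ∈ (0,N)`, then
`limsup_{|x|→∞} (I_α ∗ f)(x) |x|^{N-α} < ∞`. -/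
theorem stmt7 (N : ℕ) (hN : 1 ≤ N) (α γ : ℝ) (hα : 0 < α) (hαN : α < N) (hγ : (N : ℝ) < γ)
    (f : EuclideanSpace ℝ (Fin N) → ℝ) (hmeas : Measurable f) (hf0 : ∀ x, 0 ≤ f x)
    (hbd : ∃ M : ℝ, ∀ x, f x * (1 + ‖x‖) ^ γ ≤ M) :
    Filter.limsup (fun x => rieszConv N α f x * ENNReal.ofReal (‖x‖ ^ ((N : ℝ) - α)))
      (Bornology.cobounded (EuclideanSpace ℝ (Fin N))) < ⊤ := by
  classical
  have hn : (finrank ℝ (EuclideanSpace ℝ (Fin N)) : ℝ) = (N : ℝ) := by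
    rw [finrank_euclideanSpace_fin]
  set p : ℝ := (N : ℝ) - α with hpdef
  have hp0 : 0 < p := by rw [hpdef]; linarith
  have hpN : p < (N : ℝ) := by rw [hpdef]; linarith
  set A : ℝ := rieszConst N α with hAdef
  have hA : 0 ≤ A := by
    rw [hAdef, rieszConst]
    have h1 : 0 < Real.Gamma (((N : ℝ) - α) / 2) := Real.Gamma_pos_of_pos (by linarith)
    have h2 : 0 < Real.Gamma (α / 2) := Real.Gamma_pos_of_pos (by linarith)
    have h3 : (0 : ℝ) < Real.pi ^ ((N : ℝ) / 2) := Real.rpow_pos_of_pos Real.pi_pos _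
    have h4 : (0 : ℝ) < 2 ^ α := Real.rpow_pos_of_pos two_pos _
    positivity
  obtain ⟨M, hM⟩ := hbd
  have hM0 : 0 ≤ M := le_trans (mul_nonneg (hf0 0) (by positivity)) (hM 0)
  have hf_le : ∀ y : EuclideanSpace ℝ (Fin N), f y ≤ M * (1 + ‖y‖) ^ (-γ) := by
    intro y
    have h1 : (0 : ℝ) < (1 + ‖y‖) ^ γ := by positivity
    have h2 : f y ≤ M / (1 + ‖y‖) ^ γ := (le_div_iff₀ h1).mpr (hM y)
    rwa [Real.rpow_neg (by positivity), ← div_eq_mul_inv]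
  -- total mass of f
  set F : ℝ≥0∞ := ∫⁻ y : EuclideanSpace ℝ (Fin N), ENNReal.ofReal (f y) with hFdef
  have hF : F < ⊤ := by
    calc F ≤ ∫⁻ y : EuclideanSpace ℝ (Fin N), ENNReal.ofReal (M * (1 + ‖y‖) ^ (-γ)) :=
          lintegral_mono fun y => ENNReal.ofReal_le_ofReal (hf_le y)
      _ = ENNReal.ofReal M * ∫⁻ y : EuclideanSpace ℝ (Fin N), ENNReal.ofReal ((1 + ‖y‖) ^ (-γ)) := by
          simp_rw [ENNReal.ofReal_mul hM0]
          exact lintegral_const_mul' _ _ ENNReal.ofReal_ne_top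
      _ < ⊤ := ENNReal.mul_lt_top ENNReal.ofReal_lt_top
          (finite_integral_one_add_norm (by rw [hn]; exact hγ))
  -- kernel integral over the unit ball
  set K : ℝ≥0∞ := ∫⁻ z in closedBall (0 : EuclideanSpace ℝ (Fin N)) 1, ENNReal.ofReal (‖z‖ ^ (-p)) with hKdef
  have hK : K < ⊤ := aux_kernel_finite volume hp0 (by rw [hn]; exact hpN)
  -- the constant
  set C : ℝ≥0∞ := ENNReal.ofReal (A * M * 2 ^ (γ - α)) * K + ENNReal.ofReal (A * 2 ^ p) * F
    with hCdef
  have hC : C < ⊤ := by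
    rw [hCdef]
    exact ENNReal.add_lt_top.mpr ⟨ENNReal.mul_lt_top ENNReal.ofReal_lt_top hK,
      ENNReal.mul_lt_top ENNReal.ofReal_lt_top hF⟩
  refine lt_of_le_of_lt (limsup_le_of_le (by isBoundedDefault) ?_) hC
  filter_upwards [eventually_cobounded_le_norm (2 : ℝ)] with x hx
  -- main estimate for ‖x‖ ≥ 2
  have hx0 : (0 : ℝ) < ‖x‖ := by linarith
  have hx1 : (1 : ℝ) ≤ ‖x‖ := by linarith
  set R : ℝ := ‖x‖ / 2 with hRdef
  have hR0 : (0 : ℝ) < R := by rw [hRdef]; linarith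
  have hR1 : (1 : ℝ) ≤ R := by rw [hRdef]; linarith
  set s : Set (EuclideanSpace ℝ (Fin N)) := closedBall x R with hsdef
  set W : ℝ≥0∞ := ENNReal.ofReal (‖x‖ ^ p) with hWdef
  -- pointwise bound inside the ball
  have hI1 : (∫⁻ y in s, ENNReal.ofReal (A * f y / ‖x - y‖ ^ p))
      ≤ ENNReal.ofReal (A * M / R ^ γ) * (ENNReal.ofReal (R ^ ((N : ℝ) - p)) * K) := by
    have hpt : ∀ y ∈ s, ENNReal.ofReal (A * f y / ‖x - y‖ ^ p)
        ≤ ENNReal.ofReal (A * M / R ^ γ) * ENNReal.ofReal (‖x - y‖ ^ (-p)) := by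
      intro y hy
      have hyx : ‖x - y‖ ≤ R := by
        rw [hsdef, mem_closedBall, dist_eq_norm] at hy
        rw [norm_sub_rev]; exact hy
      have hynorm : R ≤ 1 + ‖y‖ := by
        have htri : ‖x‖ ≤ ‖y‖ + ‖x - y‖ := by
          calc ‖x‖ = ‖y + (x - y)‖ := by congr 1; abel
            _ ≤ ‖y‖ + ‖x - y‖ := norm_add_le _ _
        have : ‖x‖ - R ≤ ‖y‖ := by linarith
        rw [hRdef] at this ⊢
        linarith
      have hγ0 : (0 : ℝ) ≤ γ := by
        have : (1 : ℝ) ≤ (N : ℝ) := by exact_mod_cast hN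
        linarith
      have hRγ : R ^ γ ≤ (1 + ‖y‖) ^ γ := Real.rpow_le_rpow hR0.le hynorm hγ0
      have hRγ0 : (0 : ℝ) < R ^ γ := Real.rpow_pos_of_pos hR0 _
      have hfy : f y ≤ M / R ^ γ := by
        rw [le_div_iff₀ hRγ0]
        calc f y * R ^ γ ≤ f y * (1 + ‖y‖) ^ γ :=
              mul_le_mul_of_nonneg_left hRγ (hf0 y)
          _ ≤ M := hM y
      have hreal : A * f y / ‖x - y‖ ^ p ≤ A * M / R ^ γ * ‖x - y‖ ^ (-p) := by
        rw [Real.rpow_neg (norm_nonneg _), div_eq_mul_inv]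
        refine mul_le_mul_of_nonneg_right ?_ (inv_nonneg.2 (Real.rpow_nonneg (norm_nonneg _) _))
        calc A * f y ≤ A * (M / R ^ γ) := mul_le_mul_of_nonneg_left hfy hA
          _ = A * M / R ^ γ := by ring
      calc ENNReal.ofReal (A * f y / ‖x - y‖ ^ p)
          ≤ ENNReal.ofReal (A * M / R ^ γ * ‖x - y‖ ^ (-p)) := ENNReal.ofReal_le_ofReal hreal
        _ = ENNReal.ofReal (A * M / R ^ γ) * ENNReal.ofReal (‖x - y‖ ^ (-p)) :=
            ENNReal.ofReal_mul (by positivity)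
    calc (∫⁻ y in s, ENNReal.ofReal (A * f y / ‖x - y‖ ^ p))
        ≤ ∫⁻ y in s, ENNReal.ofReal (A * M / R ^ γ) * ENNReal.ofReal (‖x - y‖ ^ (-p)) :=
          setLIntegral_mono' measurableSet_closedBall hpt
      _ = ENNReal.ofReal (A * M / R ^ γ) * ∫⁻ y in s, ENNReal.ofReal (‖x - y‖ ^ (-p)) :=
          lintegral_const_mul' _ _ ENNReal.ofReal_ne_top
      _ = ENNReal.ofReal (A * M / R ^ γ) * (ENNReal.ofReal (R ^ ((N : ℝ) - p)) * K) := by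
          rw [hsdef, aux_kernel_translate volume p x R, aux_kernel_scaling volume p hR0, hn,
            hKdef]
  -- bound outside the ball
  have hI2 : (∫⁻ y in sᶜ, ENNReal.ofReal (A * f y / ‖x - y‖ ^ p))
      ≤ ENNReal.ofReal (A / R ^ p) * F := by
    have hpt : ∀ y ∈ sᶜ, ENNReal.ofReal (A * f y / ‖x - y‖ ^ p)
        ≤ ENNReal.ofReal (A / R ^ p) * ENNReal.ofReal (f y) := by
      intro y hy
      have hyx : R ≤ ‖x - y‖ := by
        rw [hsdef, mem_compl_iff, mem_closedBall, dist_eq_norm, not_le] at hy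
        rw [norm_sub_rev]; exact hy.le
      have hRp : (0 : ℝ) < R ^ p := Real.rpow_pos_of_pos hR0 _
      have hxp : R ^ p ≤ ‖x - y‖ ^ p := Real.rpow_le_rpow hR0.le hyx hp0.le
      have hreal : A * f y / ‖x - y‖ ^ p ≤ A / R ^ p * f y := by
        have h1 : A * f y / ‖x - y‖ ^ p ≤ A * f y / R ^ p := by
          rw [div_eq_mul_inv, div_eq_mul_inv]
          exact mul_le_mul_of_nonneg_left (inv_anti₀ hRp hxp)
            (mul_nonneg hA (hf0 y))
        calc A * f y / ‖x - y‖ ^ p ≤ A * f y / R ^ p := h1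
          _ = A / R ^ p * f y := by ring
      calc ENNReal.ofReal (A * f y / ‖x - y‖ ^ p)
          ≤ ENNReal.ofReal (A / R ^ p * f y) := ENNReal.ofReal_le_ofReal hreal
        _ = ENNReal.ofReal (A / R ^ p) * ENNReal.ofReal (f y) :=
            ENNReal.ofReal_mul (by positivity)
    calc (∫⁻ y in sᶜ, ENNReal.ofReal (A * f y / ‖x - y‖ ^ p))
        ≤ ∫⁻ y in sᶜ, ENNReal.ofReal (A / R ^ p) * ENNReal.ofReal (f y) :=
          setLIntegral_mono' measurableSet_closedBall.compl hpt
      _ ≤ ∫⁻ y, ENNReal.ofReal (A / R ^ p) * ENNReal.ofReal (f y) :=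
          setLIntegral_le_lintegral _ _
      _ = ENNReal.ofReal (A / R ^ p) * F := by
          rw [hFdef]; exact lintegral_const_mul' _ _ ENNReal.ofReal_ne_top
  -- the two real computations
  have key1 : A * M / R ^ γ * R ^ ((N : ℝ) - p) * ‖x‖ ^ p ≤ A * M * 2 ^ (γ - α) := by
    have hNp : (N : ℝ) - p = α := by rw [hpdef]; ring
    have e1 : R ^ (α - γ) = ‖x‖ ^ (α - γ) * 2 ^ (γ - α) := by
      rw [hRdef, div_eq_mul_inv, Real.mul_rpow (norm_nonneg x) (by norm_num),
        Real.inv_rpow (by norm_num), ← Real.rpow_neg (by norm_num), neg_sub]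
    have e2 : R ^ α / R ^ γ = R ^ (α - γ) := (Real.rpow_sub hR0 α γ).symm
    have e3 : ‖x‖ ^ (α - γ) * ‖x‖ ^ p = ‖x‖ ^ ((N : ℝ) - γ) := by
      rw [← Real.rpow_add hx0, hpdef]
      congr 1; ring
    have e4 : ‖x‖ ^ ((N : ℝ) - γ) ≤ 1 :=
      Real.rpow_le_one_of_one_le_of_nonpos hx1 (by linarith)
    calc A * M / R ^ γ * R ^ ((N : ℝ) - p) * ‖x‖ ^ p
        = A * M * (R ^ α / R ^ γ) * ‖x‖ ^ p := by rw [hNp]; ring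
      _ = A * M * (R ^ (α - γ) * ‖x‖ ^ p) := by rw [e2]; ring
      _ = A * M * (2 ^ (γ - α) * (‖x‖ ^ (α - γ) * ‖x‖ ^ p)) := by rw [e1]; ring
      _ = A * M * (2 ^ (γ - α) * ‖x‖ ^ ((N : ℝ) - γ)) := by rw [e3]
      _ ≤ A * M * (2 ^ (γ - α) * 1) := by
          refine mul_le_mul_of_nonneg_left ?_ (mul_nonneg hA hM0)
          exact mul_le_mul_of_nonneg_left e4 (Real.rpow_nonneg (by norm_num) _)
      _ = A * M * 2 ^ (γ - α) := by ring
  have key2 : A / R ^ p * ‖x‖ ^ p ≤ A * 2 ^ p := by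
    have e1 : ‖x‖ ^ p / R ^ p = (‖x‖ / R) ^ p := (Real.div_rpow (norm_nonneg x) hR0.le p).symm
    have e2 : ‖x‖ / R = 2 := by
      rw [hRdef]
      field_simp
    calc A / R ^ p * ‖x‖ ^ p = A * (‖x‖ ^ p / R ^ p) := by ring
      _ = A * (‖x‖ / R) ^ p := by rw [e1]
      _ ≤ A * 2 ^ p := le_of_eq (by rw [e2])
  -- put everything together
  have hsplit : rieszConv N α f x
      = (∫⁻ y in s, ENNReal.ofReal (A * f y / ‖x - y‖ ^ p))
        + (∫⁻ y in sᶜ, ENNReal.ofReal (A * f y / ‖x - y‖ ^ p)) := by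
    rw [rieszConv]
    exact (lintegral_add_compl _ measurableSet_closedBall).symm
  calc rieszConv N α f x * ENNReal.ofReal (‖x‖ ^ ((N : ℝ) - α))
      = ((∫⁻ y in s, ENNReal.ofReal (A * f y / ‖x - y‖ ^ p))
        + (∫⁻ y in sᶜ, ENNReal.ofReal (A * f y / ‖x - y‖ ^ p))) * W := by
        rw [hsplit]
    _ = (∫⁻ y in s, ENNReal.ofReal (A * f y / ‖x - y‖ ^ p)) * W
        + (∫⁻ y in sᶜ, ENNReal.ofReal (A * f y / ‖x - y‖ ^ p)) * W := add_mul _ _ _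
    _ ≤ (ENNReal.ofReal (A * M / R ^ γ) * (ENNReal.ofReal (R ^ ((N : ℝ) - p)) * K)) * W
        + (ENNReal.ofReal (A / R ^ p) * F) * W :=
        add_le_add (mul_le_mul_left hI1 W) (mul_le_mul_left hI2 W)
    _ = ENNReal.ofReal (A * M / R ^ γ * R ^ ((N : ℝ) - p) * ‖x‖ ^ p) * K
        + ENNReal.ofReal (A / R ^ p * ‖x‖ ^ p) * F := by
        have w1 : ENNReal.ofReal (A * M / R ^ γ * R ^ ((N : ℝ) - p) * ‖x‖ ^ p)
            = ENNReal.ofReal (A * M / R ^ γ) * ENNReal.ofReal (R ^ ((N : ℝ) - p))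
              * ENNReal.ofReal (‖x‖ ^ p) := by
          rw [ENNReal.ofReal_mul (by positivity : (0:ℝ) ≤ A * M / R ^ γ * R ^ ((N : ℝ) - p)),
            ENNReal.ofReal_mul (by positivity : (0:ℝ) ≤ A * M / R ^ γ)]
        have w2 : ENNReal.ofReal (A / R ^ p * ‖x‖ ^ p)
            = ENNReal.ofReal (A / R ^ p) * ENNReal.ofReal (‖x‖ ^ p) :=
          ENNReal.ofReal_mul (by positivity : (0:ℝ) ≤ A / R ^ p)
        rw [hWdef, w1, w2]
        ring
    _ ≤ ENNReal.ofReal (A * M * 2 ^ (γ - α)) * K + ENNReal.ofReal (A * 2 ^ p) * F :=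
        add_le_add (mul_le_mul_left (ENNReal.ofReal_le_ofReal key1) K)
          (mul_le_mul_left (ENNReal.ofReal_le_ofReal key2) F)
    _ = C := by rw [hCdef]
end

section
/- Let N ≥ 3, α ∈ (0,N), p > 0, q ∈ ℝ with p + q ≥ 1, and ρ > 0. Suppose u ≥ 0 is measurable on ℝ^N \ B_ρ, satisfies u(x) ≥ c|x|^{-(N-2)} for |x| ≥ 2ρ with c > 0, and satisfies the master inequality C R^{2N-2-α} ≥ (∫_{B_{2R}\setminus B_ρ} u^p)(∫_{B_{2R}\setminus B_R} u^{q-1}) for all R ≥ R_0. If 1 ≤ p + q < (N+α)/(N-2), then no such u exists: the Cauchy–Schwarz estimate (∫_{B_{2R}\setminus B_R} u^{(p+q-1)/2})^2 ≤ (∫_{B_{2R}\setminus B_ρ} u^p)(∫_{B_{2R}\setminus B_R} u^{q-1}) combined with the lower bound yields c' R^{2N-(N-2)(p+q-1)} ≤ C R^{2N-2-α} for all large R, which is a contradiction. -/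
open MeasureTheory ENNReal Metric

/-- Let `N ≥ 3`, `α ∈ (0,N)`, `p > 0`, `1 ≤ p + q < (N+α)/(N-2)`, `ρ > 0`. No nonnegative
measurable `u` on the exterior domain can satisfy both the lower bound
`u(x) ≥ c|x|^{-(N-2)}` for `|x| ≥ 2ρ` (`c > 0`) and the master inequality
`C R^{2N-2-α} ≥ (∫_{B_{2R}∖B_ρ} u^p)(∫_{B_{2R}∖B_R} u^{q-1})` for all `R ≥ R₀`:
by Cauchy–Schwarz and the lower bound these force
`c' R^{2N-(N-2)(p+q-1)} ≤ C R^{2N-2-α}` for all large `R`, a contradiction. -/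
theorem stmt12 (N : ℕ) (hN : 3 ≤ N) (α p q c C ρ R₀ : ℝ) (hα : 0 < α) (hαN : α < N)
    (hp : 0 < p) (hc : 0 < c) (hρ : 0 < ρ) (hR₀ : 2 * ρ ≤ R₀)
    (hpq1 : 1 ≤ p + q) (hpq2 : p + q < ((N : ℝ) + α) / ((N : ℝ) - 2))
    (u : EuclideanSpace ℝ (Fin N) → ℝ) (hmeas : Measurable u) (hu0 : ∀ x, 0 ≤ u x)
    (hlow : ∀ x : EuclideanSpace ℝ (Fin N), 2 * ρ ≤ ‖x‖ →
      c * ‖x‖ ^ (-((N : ℝ) - 2)) ≤ u x)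
    (hmaster : ∀ R : ℝ, R₀ ≤ R →
      (∫⁻ x in {x : EuclideanSpace ℝ (Fin N) | ρ ≤ ‖x‖ ∧ ‖x‖ < 2 * R},
          ENNReal.ofReal (u x ^ p)) *
        (∫⁻ x in {x : EuclideanSpace ℝ (Fin N) | R ≤ ‖x‖ ∧ ‖x‖ < 2 * R},
          ENNReal.ofReal (u x ^ (q - 1))) ≤
        ENNReal.ofReal (C * R ^ (2 * (N : ℝ) - 2 - α))) :
    False := by
  have hN3 : (3 : ℝ) ≤ (N : ℝ) := by exact_mod_cast hN
  haveI : Nontrivial (EuclideanSpace ℝ (Fin N)) := by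
    refine ⟨⟨EuclideanSpace.single (⟨0, by omega⟩ : Fin N) (1 : ℝ), 0, fun hcontra => ?_⟩⟩
    have h := congrArg norm hcontra
    rw [EuclideanSpace.norm_single, norm_one, norm_zero] at h
    exact one_ne_zero h
  have hN2 : (0 : ℝ) < (N : ℝ) - 2 := by linarith
  set s : ℝ := (p + q - 1) / 2 with hs_def
  have hs0 : 0 ≤ s := by rw [hs_def]; linarith
  set b : ℝ := 2 * (N : ℝ) - 2 - α with hb_def
  set a : ℝ := 2 * (N : ℝ) - ((N : ℝ) - 2) * (p + q - 1) with ha_def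
  have hab : 0 < a - b := by
    have h1 : (p + q) * ((N : ℝ) - 2) < (N : ℝ) + α := (lt_div_iff₀ hN2).mp hpq2
    rw [ha_def, hb_def]; nlinarith
  set κ := (volume (ball (0 : EuclideanSpace ℝ (Fin N)) 1)).toReal with hκ_def
  have hκball : volume (ball (0 : EuclideanSpace ℝ (Fin N)) 1) = ENNReal.ofReal κ := by
    rw [hκ_def, ENNReal.ofReal_toReal measure_ball_lt_top.ne]
  have hκ0 : 0 < κ := by
    rw [hκ_def]
    exact ENNReal.toReal_pos (measure_ball_pos volume _ one_pos).ne' measure_ball_lt_top.ne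
  set c₀ : ℝ := c ^ s * (2 : ℝ) ^ (-(((N : ℝ) - 2) * s)) * (4 : ℝ)⁻¹ ^ N * κ with hc₀_def
  have hc₀ : 0 < c₀ := by
    rw [hc₀_def]
    exact mul_pos (mul_pos (mul_pos (Real.rpow_pos_of_pos hc s)
      (Real.rpow_pos_of_pos two_pos _)) (pow_pos (by norm_num) N)) hκ0
  set K : ℝ := c₀ ^ 2 with hK_def
  have hK0 : 0 < K := pow_pos hc₀ 2
  set R₁ : ℝ := max R₀ (max (2 * ρ) 1) with hR₁_def
  have hR₁1 : (1 : ℝ) ≤ R₁ := le_max_of_le_right (le_max_right _ _)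
  have hR₁0 : (0 : ℝ) < R₁ := by linarith
  -- the key inequality
  have key : ∀ R : ℝ, R₁ ≤ R → K * R ^ a ≤ C * R ^ b := by
    intro R hR
    have hRR₀ : R₀ ≤ R := le_trans (le_max_left _ _) hR
    have hR2ρ : 2 * ρ ≤ R := le_trans (le_trans (le_max_left _ _) (le_max_right _ _)) hR
    have hR1 : (1 : ℝ) ≤ R := le_trans (le_trans (le_max_right _ _) (le_max_right _ _)) hR
    have hR0 : (0 : ℝ) < R := by linarith
    have h2R : (0 : ℝ) < 2 * R := by linarith
    set m : ℝ := c * (2 * R) ^ (-((N : ℝ) - 2)) with hm_def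
    have hm0 : 0 < m := mul_pos hc (Real.rpow_pos_of_pos h2R _)
    set A : Set (EuclideanSpace ℝ (Fin N)) := {x | R ≤ ‖x‖ ∧ ‖x‖ < 2 * R} with hA_def
    have hAmeas : MeasurableSet A := by
      have : A = (fun x : EuclideanSpace ℝ (Fin N) => ‖x‖) ⁻¹' Set.Ico R (2 * R) := rfl
      rw [this]; exact measurable_norm measurableSet_Ico
    have hmem : ∀ x ∈ A, m ≤ u x := by
      intro x hx
      obtain ⟨hx1, hx2⟩ := hx
      have hx0 : (0 : ℝ) < ‖x‖ := lt_of_lt_of_le hR0 hx1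
      have h1 : c * ‖x‖ ^ (-((N : ℝ) - 2)) ≤ u x := hlow x (le_trans hR2ρ hx1)
      have h2 : (2 * R) ^ (-((N : ℝ) - 2)) ≤ ‖x‖ ^ (-((N : ℝ) - 2)) :=
        Real.rpow_le_rpow_of_nonpos hx0 hx2.le (by linarith)
      calc m = c * (2 * R) ^ (-((N : ℝ) - 2)) := rfl
        _ ≤ c * ‖x‖ ^ (-((N : ℝ) - 2)) := mul_le_mul_of_nonneg_left h2 hc.le
        _ ≤ u x := h1
    have hupos : ∀ x ∈ A, 0 < u x := fun x hx => lt_of_lt_of_le hm0 (hmem x hx)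
    set X := ∫⁻ x in A, ENNReal.ofReal (u x ^ s) with hX_def
    set Y := ∫⁻ x in A, ENNReal.ofReal (u x ^ p) with hY_def
    set Z := ∫⁻ x in A, ENNReal.ofReal (u x ^ (q - 1)) with hZ_def
    -- Cauchy–Schwarz
    have hCS : X ^ 2 ≤ Y * Z := by
      set f : EuclideanSpace ℝ (Fin N) → ℝ≥0∞ :=
        fun x => ENNReal.ofReal (u x ^ (p / 2)) with hf_def
      set g : EuclideanSpace ℝ (Fin N) → ℝ≥0∞ :=
        fun x => ENNReal.ofReal (u x ^ ((q - 1) / 2)) with hg_def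
      have hfmeas : Measurable f := (hmeas.pow measurable_const).ennreal_ofReal
      have hgmeas : Measurable g := (hmeas.pow measurable_const).ennreal_ofReal
      have hconj : Real.HolderConjugate 2 2 := ⟨by norm_num, by norm_num, by norm_num⟩
      have hfg := ENNReal.lintegral_mul_le_Lp_mul_Lq (volume.restrict A) hconj
        hfmeas.aemeasurable hgmeas.aemeasurable
      have hXeq : (∫⁻ x in A, (f * g) x) = X := by
        refine setLIntegral_congr_fun hAmeas (fun x hx => ?_)
        have hux : 0 < u x := hupos x hx
        have h1 : u x ^ (p / 2) * u x ^ ((q - 1) / 2) = u x ^ s := by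
          rw [← Real.rpow_add hux]; congr 1; rw [hs_def]; ring
        simp only [Pi.mul_apply, hf_def, hg_def,
          ← ENNReal.ofReal_mul (Real.rpow_nonneg (hu0 x) _), h1]
      have hYeq : (∫⁻ x in A, f x ^ (2 : ℝ)) = Y := by
        refine lintegral_congr fun x => ?_
        rw [hf_def]
        rw [ENNReal.ofReal_rpow_of_nonneg (Real.rpow_nonneg (hu0 x) _) (by norm_num),
          ← Real.rpow_mul (hu0 x)]
        norm_num
      have hZeq : (∫⁻ x in A, g x ^ (2 : ℝ)) = Z := by
        refine lintegral_congr fun x => ?_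
        rw [hg_def]
        rw [ENNReal.ofReal_rpow_of_nonneg (Real.rpow_nonneg (hu0 x) _) (by norm_num),
          ← Real.rpow_mul (hu0 x)]
        rw [div_mul_cancel₀]
        norm_num
      rw [hXeq, hYeq, hZeq] at hfg
      have hsq : ∀ W : ℝ≥0∞, (W ^ ((1 : ℝ) / 2)) ^ (2 : ℕ) = W := by
        intro W
        rw [← ENNReal.rpow_natCast (W ^ ((1 : ℝ) / 2)) 2, ← ENNReal.rpow_mul]
        norm_num
      calc X ^ 2 ≤ (Y ^ ((1 : ℝ) / 2) * Z ^ ((1 : ℝ) / 2)) ^ 2 :=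
            pow_le_pow_left₀ zero_le hfg 2
        _ = Y * Z := by rw [mul_pow, hsq, hsq]
    -- lower bound for X
    have hXlow : ENNReal.ofReal (m ^ s) * (ENNReal.ofReal ((R / 4) ^ N) * ENNReal.ofReal κ)
        ≤ X := by
      have h1 : ENNReal.ofReal (m ^ s) * volume A ≤ X := by
        rw [← setLIntegral_const A]
        exact setLIntegral_mono' hAmeas fun x hx =>
          ENNReal.ofReal_le_ofReal (Real.rpow_le_rpow hm0.le (hmem x hx) hs0)
      refine le_trans (mul_le_mul_right ?_ _) h1
      set x₀ : EuclideanSpace ℝ (Fin N) :=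
        (3 * R / 2) • EuclideanSpace.single (⟨0, by omega⟩ : Fin N) (1 : ℝ) with hx₀_def
      have hx₀ : ‖x₀‖ = 3 * R / 2 := by
        rw [hx₀_def, norm_smul, EuclideanSpace.norm_single, norm_one, mul_one,
          Real.norm_eq_abs, abs_of_pos (by linarith)]
      have hsub : ball x₀ (R / 4) ⊆ A := by
        intro x hx
        rw [mem_ball, dist_eq_norm] at hx
        have h1 : ‖x₀‖ - ‖x‖ ≤ ‖x₀ - x‖ := norm_sub_norm_le _ _
        have h2 : ‖x‖ - ‖x₀‖ ≤ ‖x - x₀‖ := norm_sub_norm_le _ _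
        rw [norm_sub_rev x₀ x] at h1
        constructor
        · rw [hx₀] at h1; linarith
        · rw [hx₀] at h2; linarith
      have hball : volume (ball x₀ (R / 4)) =
          ENNReal.ofReal ((R / 4) ^ N) * ENNReal.ofReal κ := by
        rw [Measure.addHaar_ball volume x₀ (by linarith : (0 : ℝ) ≤ R / 4), hκball,
          finrank_euclideanSpace_fin]
      rw [← hball]
      exact measure_mono hsub
    -- monotonicity of the p-integral
    have hYB : Y ≤ ∫⁻ x in {x : EuclideanSpace ℝ (Fin N) | ρ ≤ ‖x‖ ∧ ‖x‖ < 2 * R},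
        ENNReal.ofReal (u x ^ p) :=
      lintegral_mono_set fun x hx => ⟨le_trans (by linarith) hx.1, hx.2⟩
    have hm' := hmaster R hRR₀
    have hfinal : (ENNReal.ofReal (m ^ s) *
        (ENNReal.ofReal ((R / 4) ^ N) * ENNReal.ofReal κ)) ^ 2 ≤
        ENNReal.ofReal (C * R ^ b) := by
      calc _ ≤ X ^ 2 := pow_le_pow_left₀ zero_le hXlow 2
        _ ≤ Y * Z := hCS
        _ ≤ _ := mul_le_mul_left hYB Z
        _ ≤ ENNReal.ofReal (C * R ^ b) := hm'
    have e1 : ENNReal.ofReal (m ^ s) * (ENNReal.ofReal ((R / 4) ^ N) * ENNReal.ofReal κ) =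
        ENNReal.ofReal (m ^ s * ((R / 4) ^ N * κ)) := by
      rw [ENNReal.ofReal_mul (Real.rpow_nonneg hm0.le s),
        ENNReal.ofReal_mul (by positivity : (0 : ℝ) ≤ (R / 4) ^ N)]
    rw [e1, ← ENNReal.ofReal_pow (by positivity)] at hfinal
    have hLpos : 0 < (m ^ s * ((R / 4) ^ N * κ)) ^ 2 := by
      have := Real.rpow_pos_of_pos hm0 s
      positivity
    have hreal : (m ^ s * ((R / 4) ^ N * κ)) ^ 2 ≤ C * R ^ b := by
      rcases ENNReal.ofReal_le_ofReal_iff'.mp hfinal with h' | h'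
      · exact h'
      · linarith
    -- identify the left-hand side with K * R ^ a
    have hms : m ^ s = (c ^ s * (2 : ℝ) ^ (-(((N : ℝ) - 2) * s))) *
        R ^ (-(((N : ℝ) - 2) * s)) := by
      calc m ^ s = (c * (2 * R) ^ (-((N : ℝ) - 2))) ^ s := by rw [hm_def]
        _ = c ^ s * ((2 * R) ^ (-((N : ℝ) - 2))) ^ s :=
            Real.mul_rpow hc.le (Real.rpow_nonneg h2R.le _)
        _ = c ^ s * (2 * R) ^ (-((N : ℝ) - 2) * s) := by rw [← Real.rpow_mul h2R.le]
        _ = c ^ s * ((2 : ℝ) ^ (-((N : ℝ) - 2) * s) * R ^ (-((N : ℝ) - 2) * s)) := by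
            rw [Real.mul_rpow (by norm_num) hR0.le]
        _ = (c ^ s * (2 : ℝ) ^ (-(((N : ℝ) - 2) * s))) * R ^ (-(((N : ℝ) - 2) * s)) := by
            rw [neg_mul]; ring
    have hRN : ((R / 4 : ℝ)) ^ N = (4 : ℝ)⁻¹ ^ N * R ^ ((N : ℕ) : ℝ) := by
      rw [Real.rpow_natCast, div_eq_mul_inv, mul_pow]; ring
    have hprod : m ^ s * ((R / 4) ^ N * κ) = c₀ * R ^ (-(((N : ℝ) - 2) * s) + (N : ℝ)) := by
      rw [hms, hRN, Real.rpow_add hR0, hc₀_def]; ring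
    have hsq2 : (c₀ * R ^ (-(((N : ℝ) - 2) * s) + (N : ℝ))) ^ 2 = K * R ^ a := by
      have hexp : (-(((N : ℝ) - 2) * s) + (N : ℝ)) * 2 = a := by
        rw [ha_def, hs_def]; ring
      rw [mul_pow, hK_def, ← Real.rpow_natCast (R ^ (-(((N : ℝ) - 2) * s) + (N : ℝ))) 2,
        ← Real.rpow_mul hR0.le]
      push_cast
      rw [hexp]
    rw [hprod, hsq2] at hreal
    exact hreal
  -- derive a contradiction from `key`
  have hC : 0 < C := by
    have h := key R₁ le_rfl
    have h1 : 0 < R₁ ^ a := Real.rpow_pos_of_pos hR₁0 a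
    have h2 : 0 < R₁ ^ b := Real.rpow_pos_of_pos hR₁0 b
    by_contra hC'
    push_neg at hC'
    have h3 : C * R₁ ^ b ≤ 0 := mul_nonpos_iff.mpr (Or.inr ⟨hC', h2.le⟩)
    have h4 : 0 < K * R₁ ^ a := mul_pos hK0 h1
    linarith
  set R₂ : ℝ := max R₁ ((C / K + 1) ^ ((1 : ℝ) / (a - b))) with hR₂_def
  have hR₂R₁ : R₁ ≤ R₂ := le_max_left _ _
  have hR₂0 : (0 : ℝ) < R₂ := lt_of_lt_of_le hR₁0 hR₂R₁
  have h := key R₂ hR₂R₁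
  have hsplit : R₂ ^ a = R₂ ^ b * R₂ ^ (a - b) := by
    rw [← Real.rpow_add hR₂0]; congr 1; ring
  have hKt : K * R₂ ^ (a - b) ≤ C := by
    have hb' : 0 < R₂ ^ b := Real.rpow_pos_of_pos hR₂0 b
    have h' : (K * R₂ ^ (a - b)) * R₂ ^ b ≤ C * R₂ ^ b := by
      calc (K * R₂ ^ (a - b)) * R₂ ^ b = K * R₂ ^ a := by rw [hsplit]; ring
        _ ≤ C * R₂ ^ b := h
    exact le_of_mul_le_mul_right h' hb'
  have hbase0 : (0 : ℝ) < C / K + 1 := by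
    have := div_pos hC hK0; linarith
  have hRt : C / K + 1 ≤ R₂ ^ (a - b) := by
    calc C / K + 1 = ((C / K + 1) ^ ((1 : ℝ) / (a - b))) ^ (a - b) := by
          rw [← Real.rpow_mul hbase0.le, one_div, inv_mul_cancel₀ hab.ne', Real.rpow_one]
      _ ≤ R₂ ^ (a - b) :=
          Real.rpow_le_rpow (Real.rpow_nonneg hbase0.le _) (le_max_right _ _) hab.le
  have hfin : K * (C / K + 1) ≤ C :=
    le_trans (mul_le_mul_of_nonneg_left hRt hK0.le) hKt
  have : K * (C / K + 1) = C + K := by field_simp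
  linarith [hfin, this.symm.le, hK0]
end

section
/- Let α ∈ (0,N) and f ∈ L¹_loc(ℝ^N) be nonnegative. Then (I_α ∗ f)(x) < ∞ for almost every x ∈ ℝ^N if and only if ∫_{ℝ^N} f(y)(1+|y|)^{-(N-α)} dy < ∞. Moreover, if the latter integral is infinite, then (I_α ∗ f)(x) = +∞ for every x ∈ ℝ^N. -/
open MeasureTheory ENNReal

open Set Metric

private lemma aux_ballpot (N : ℕ) {K : ℝ} (hK : 0 < K) (hKN : K < N) (R : ℝ) :
    ∃ C : ℝ≥0∞, C ≠ ⊤ ∧ ∀ y : EuclideanSpace ℝ (Fin N),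
      (∫⁻ x in Metric.ball y R, ENNReal.ofReal (1 / ‖x - y‖ ^ K)) ≤ C := by
  have hNK : -(K⁻¹ * N) < -1 := by
    rw [neg_lt_neg_iff]
    rw [lt_inv_mul_iff₀ hK]
    simpa using hKN
  have htail : (∫⁻ t in Ioi (1:ℝ), ENNReal.ofReal (t ^ (-(K⁻¹ * (N:ℝ))))) < ⊤ :=
    (integrableOn_Ioi_rpow_of_lt hNK one_pos).setLIntegral_lt_top
  refine ⟨volume (Metric.ball (0 : EuclideanSpace ℝ (Fin N)) R)
    + (∫⁻ t in Ioi (1:ℝ), ENNReal.ofReal (t ^ (-(K⁻¹ * (N:ℝ)))))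
      * volume (Metric.ball (0 : EuclideanSpace ℝ (Fin N)) 1), ?_, ?_⟩
  · exact (ENNReal.add_lt_top.mpr ⟨measure_ball_lt_top,
      ENNReal.mul_lt_top htail measure_ball_lt_top⟩).ne
  intro y
  have hmeas : Measurable fun x : EuclideanSpace ℝ (Fin N) => 1 / ‖x - y‖ ^ K := by
    fun_prop
  rw [lintegral_eq_lintegral_meas_le _ (ae_of_all _ fun x => by positivity) hmeas.aemeasurable]
  set m : ℝ → ℝ≥0∞ := fun t =>
    (volume.restrict (Metric.ball y R)) {x | t ≤ 1 / ‖x - y‖ ^ K} with hm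
  calc ∫⁻ t in Ioi (0:ℝ), m t
      ≤ ∫⁻ t in Ioc (0:ℝ) 1 ∪ Ioi 1, m t := lintegral_mono_set Ioi_subset_Ioc_union_Ioi
    _ ≤ (∫⁻ t in Ioc (0:ℝ) 1, m t) + ∫⁻ t in Ioi (1:ℝ), m t := lintegral_union_le _ _ _
    _ ≤ volume (Metric.ball (0 : EuclideanSpace ℝ (Fin N)) R)
        + (∫⁻ t in Ioi (1:ℝ), ENNReal.ofReal (t ^ (-(K⁻¹ * (N:ℝ)))))
          * volume (Metric.ball (0 : EuclideanSpace ℝ (Fin N)) 1) := by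
      gcongr with t
      · calc ∫⁻ t in Ioc (0:ℝ) 1, m t
            ≤ ∫⁻ _ in Ioc (0:ℝ) 1, volume (Metric.ball (0 : EuclideanSpace ℝ (Fin N)) R) := by
              apply lintegral_mono fun t => ?_
              calc m t ≤ (volume.restrict (Metric.ball y R)) univ := measure_mono (subset_univ _)
                _ = volume (Metric.ball y R) := by simp
                _ = volume (Metric.ball (0 : EuclideanSpace ℝ (Fin N)) R) :=
                    Measure.addHaar_ball_center _ _ _
          _ ≤ volume (Metric.ball (0 : EuclideanSpace ℝ (Fin N)) R) := by
              rw [setLIntegral_const]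
              simp [Real.volume_Ioc]
      · rw [← lintegral_mul_const' _ _ measure_ball_lt_top.ne]
        apply setLIntegral_mono' measurableSet_Ioi fun t ht => ?_
        have ht1 : (1:ℝ) < t := ht
        have ht0 : (0:ℝ) < t := lt_trans one_pos ht1
        have hsub : {x : EuclideanSpace ℝ (Fin N) | t ≤ 1 / ‖x - y‖ ^ K}
            ⊆ Metric.closedBall y (t ^ (-K⁻¹)) := by
          intro x hx
          simp only [mem_setOf_eq] at hx
          rw [Metric.mem_closedBall, dist_eq_norm]
          rcases eq_or_lt_of_le (norm_nonneg (x - y)) with h0 | h0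
          · rw [← h0]; positivity
          · have : ‖x - y‖ ≤ t ^ (-K)⁻¹ := by
              rw [Real.le_rpow_inv_iff_of_neg h0 ht0 (neg_lt_zero.mpr hK)]
              rwa [Real.rpow_neg (le_of_lt h0), ← one_div]
            rwa [inv_neg] at this
        calc m t ≤ volume (Metric.closedBall y (t ^ (-K⁻¹))) :=
              le_trans (measure_mono hsub) (Measure.restrict_apply_le _ _)
          _ = ENNReal.ofReal ((t ^ (-K⁻¹)) ^ (Module.finrank ℝ (EuclideanSpace ℝ (Fin N))))
              * volume (Metric.ball (0 : EuclideanSpace ℝ (Fin N)) 1) := by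
            rw [Measure.addHaar_closedBall _ _ (Real.rpow_nonneg ht0.le _)]
          _ = ENNReal.ofReal (t ^ (-(K⁻¹ * (N:ℝ))))
              * volume (Metric.ball (0 : EuclideanSpace ℝ (Fin N)) 1) := by
            congr 2
            rw [finrank_euclideanSpace_fin, ← Real.rpow_natCast (t ^ (-K⁻¹)) N,
              ← Real.rpow_mul ht0.le, neg_mul]

/-- For `f ∈ L¹_loc(ℝ^N)` nonnegative and `α ∈ (0,N)`: `(I_α ∗ f)(x) < ∞` for a.e. `x`
iff `∫ f(y)(1+|y|)^{-(N-α)} dy < ∞`; and when the latter integral is infinite,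
`(I_α ∗ f)(x) = ∞` for every `x`. -/
theorem stmt15 (N : ℕ) (hN : 1 ≤ N) (α : ℝ) (hα : 0 < α) (hαN : α < N)
    (f : EuclideanSpace ℝ (Fin N) → ℝ) (hf0 : ∀ x, 0 ≤ f x)
    (hf : LocallyIntegrable f volume) :
    ((∀ᵐ x : EuclideanSpace ℝ (Fin N), rieszConv N α f x < ⊤) ↔
      (∫⁻ y, ENNReal.ofReal (f y * (1 + ‖y‖) ^ (-((N : ℝ) - α)))) < ⊤) ∧
    ((∫⁻ y, ENNReal.ofReal (f y * (1 + ‖y‖) ^ (-((N : ℝ) - α)))) = ⊤ →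
      ∀ x : EuclideanSpace ℝ (Fin N), rieszConv N α f x = ⊤) := by
  set K : ℝ := (N : ℝ) - α with hKdef
  have hK : 0 < K := sub_pos.mpr hαN
  have hKN : K < N := sub_lt_self _ hα
  have hc : 0 < rieszConst N α := by
    unfold rieszConst
    have h1 : 0 < Real.Gamma (((N : ℝ) - α) / 2) := Real.Gamma_pos_of_pos (by linarith)
    have h2 : 0 < Real.Gamma (α / 2) := Real.Gamma_pos_of_pos (by linarith)
    have h3 : (0:ℝ) < Real.pi ^ ((N : ℝ) / 2) := Real.rpow_pos_of_pos Real.pi_pos _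
    have h4 : (0:ℝ) < (2:ℝ) ^ α := Real.rpow_pos_of_pos two_pos _
    positivity
  -- measurable representative
  have hsm := hf.aestronglyMeasurable
  set g : EuclideanSpace ℝ (Fin N) → ℝ := fun y => max (hsm.mk f y) 0 with hgdef
  have hgmeas : Measurable g := hsm.stronglyMeasurable_mk.measurable.max measurable_const
  have hg0 : ∀ y, 0 ≤ g y := fun y => le_max_right _ _
  have hfg : f =ᵐ[volume] g := hsm.ae_eq_mk.mono fun y hy => by
    rw [hgdef]; simp only [← hy]; exact (max_eq_left (hf0 y)).symm
  have hΦm : Measurable fun p : EuclideanSpace ℝ (Fin N) × EuclideanSpace ℝ (Fin N) =>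
      ENNReal.ofReal (rieszConst N α * g p.2 / ‖p.1 - p.2‖ ^ K) := by
    apply ENNReal.measurable_ofReal.comp
    apply Measurable.div
    · exact (hgmeas.comp measurable_snd).const_mul _
    · exact ((measurable_fst.sub measurable_snd).norm).pow measurable_const
  have hconv : ∀ x : EuclideanSpace ℝ (Fin N), rieszConv N α f x =
      ∫⁻ y, ENNReal.ofReal (rieszConst N α * g y / ‖x - y‖ ^ K) := by
    intro x
    refine lintegral_congr_ae (hfg.mono fun y hy => ?_)
    simp only [hy]
    rfl
  have hJ : (∫⁻ y, ENNReal.ofReal (f y * (1 + ‖y‖) ^ (-K)))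
      = ∫⁻ y, ENNReal.ofReal (g y * (1 + ‖y‖) ^ (-K)) :=
    lintegral_congr_ae (hfg.mono fun y hy => by simp only [hy])
  have hloc : ∀ (x : EuclideanSpace ℝ (Fin N)) (r : ℝ), (∫⁻ y in Metric.closedBall x r, ENNReal.ofReal (g y)) < ⊤ := by
    intro x r
    have h1 : IntegrableOn f (Metric.closedBall x r) volume :=
      hf.integrableOn_isCompact (isCompact_closedBall x r)
    have h2 : (∫⁻ y in Metric.closedBall x r, ENNReal.ofReal (g y))
        = ∫⁻ y in Metric.closedBall x r, ENNReal.ofReal (f y) :=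
      lintegral_congr_ae ((ae_restrict_of_ae hfg).mono fun y hy => by simp only [hy])
    rw [h2]
    exact h1.setLIntegral_lt_top
  -- Part 2
  have main2 : (∫⁻ y, ENNReal.ofReal (g y * (1 + ‖y‖) ^ (-K))) = ⊤ →
      ∀ x : EuclideanSpace ℝ (Fin N), rieszConv N α f x = ⊤ := by
    intro hJtop x
    rw [hconv x]
    set S : Set (EuclideanSpace ℝ (Fin N)) := {y | 1 ≤ ‖x - y‖} with hSdef
    have hSm : MeasurableSet S :=
      measurableSet_le measurable_const ((measurable_const.sub measurable_id).norm)
    have hcomplfin : (∫⁻ y in Sᶜ, ENNReal.ofReal (g y * (1 + ‖y‖) ^ (-K))) < ⊤ := by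
      refine lt_of_le_of_lt ?_ (hloc x 1)
      have hsub : Sᶜ ⊆ Metric.closedBall x 1 := by
        intro y hy
        simp only [hSdef, mem_compl_iff, mem_setOf_eq, not_le] at hy
        rw [Metric.mem_closedBall, dist_eq_norm, ← norm_neg, neg_sub]
        exact hy.le
      refine le_trans (lintegral_mono fun y => ?_) (lintegral_mono_set hsub)
      apply ENNReal.ofReal_le_ofReal
      calc g y * (1 + ‖y‖) ^ (-K) ≤ g y * 1 := by
            apply mul_le_mul_of_nonneg_left ?_ (hg0 y)
            exact Real.rpow_le_one_of_one_le_of_nonpos (by linarith [norm_nonneg y])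
              (neg_nonpos.mpr hK.le)
        _ = g y := mul_one _
    have hStop : (∫⁻ y in S, ENNReal.ofReal (g y * (1 + ‖y‖) ^ (-K))) = ⊤ := by
      by_contra h
      have hadd := lintegral_add_compl
        (fun y => ENNReal.ofReal (g y * (1 + ‖y‖) ^ (-K))) hSm (μ := volume)
      rw [hJtop] at hadd
      exact (ENNReal.add_lt_top.mpr ⟨lt_top_iff_ne_top.mpr h, hcomplfin⟩).ne hadd
    set Cx : ℝ := rieszConst N α * (1 + ‖x‖) ^ (-K) with hCxdef
    have hCxpos : 0 < Cx := mul_pos hc (Real.rpow_pos_of_pos (by positivity) _)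
    have hlow : ∀ y ∈ S, ENNReal.ofReal Cx * ENNReal.ofReal (g y * (1 + ‖y‖) ^ (-K))
        ≤ ENNReal.ofReal (rieszConst N α * g y / ‖x - y‖ ^ K) := by
      intro y hy
      rw [← ENNReal.ofReal_mul hCxpos.le]
      apply ENNReal.ofReal_le_ofReal
      have h1 : (1:ℝ) ≤ ‖x - y‖ := hy
      have hpos : (0:ℝ) < ‖x - y‖ ^ K := Real.rpow_pos_of_pos (by linarith) _
      have h2 : ‖x - y‖ ^ K ≤ ((1 + ‖x‖) * (1 + ‖y‖)) ^ K := by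
        apply Real.rpow_le_rpow (norm_nonneg _) ?_ hK.le
        calc ‖x - y‖ ≤ ‖x‖ + ‖y‖ := norm_sub_le _ _
          _ ≤ (1 + ‖x‖) * (1 + ‖y‖) := by nlinarith [norm_nonneg x, norm_nonneg y]
      calc Cx * (g y * (1 + ‖y‖) ^ (-K))
          = (rieszConst N α * g y) / ((1 + ‖x‖) * (1 + ‖y‖)) ^ K := by
            rw [hCxdef, Real.mul_rpow (by positivity) (by positivity),
              Real.rpow_neg (by positivity), Real.rpow_neg (by positivity),
              div_eq_mul_inv, mul_inv]
            ring
        _ ≤ (rieszConst N α * g y) / ‖x - y‖ ^ K := by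
            apply div_le_div_of_nonneg_left ?_ hpos h2
            exact mul_nonneg hc.le (hg0 y)
    apply top_le_iff.mp
    calc (⊤ : ℝ≥0∞) = ENNReal.ofReal Cx * ∫⁻ y in S, ENNReal.ofReal (g y * (1 + ‖y‖) ^ (-K)) := by
          rw [hStop, ENNReal.mul_top (by simpa [ENNReal.ofReal_eq_zero] using hCxpos.not_ge)]
      _ = ∫⁻ y in S, ENNReal.ofReal Cx * ENNReal.ofReal (g y * (1 + ‖y‖) ^ (-K)) :=
          (lintegral_const_mul' _ _ ENNReal.ofReal_ne_top).symm
      _ ≤ ∫⁻ y in S, ENNReal.ofReal (rieszConst N α * g y / ‖x - y‖ ^ K) :=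
          setLIntegral_mono' hSm hlow
      _ ≤ ∫⁻ y, ENNReal.ofReal (rieszConst N α * g y / ‖x - y‖ ^ K) :=
          setLIntegral_le_lintegral _ _
  -- Part 1 backward
  have main1 : (∫⁻ y, ENNReal.ofReal (g y * (1 + ‖y‖) ^ (-K))) < ⊤ →
      ∀ᵐ x : EuclideanSpace ℝ (Fin N), rieszConv N α f x < ⊤ := by
    intro hJfin
    have key : ∀ n : ℕ, ∀ᵐ x : EuclideanSpace ℝ (Fin N), x ∈ Metric.ball (0:EuclideanSpace ℝ (Fin N)) n → rieszConv N α f x < ⊤ := by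
      intro n
      set R : ℝ := (n : ℝ) + 1 with hRdef
      have hR1 : (1:ℝ) ≤ R := by
        rw [hRdef]; linarith [(Nat.cast_nonneg n : (0:ℝ) ≤ (n:ℝ))]
      set Φ : EuclideanSpace ℝ (Fin N) → EuclideanSpace ℝ (Fin N) → ℝ≥0∞ :=
        fun x y => ENNReal.ofReal (rieszConst N α * g y / ‖x - y‖ ^ K) with hΦdef
      have hF : Measurable fun x : EuclideanSpace ℝ (Fin N) => ∫⁻ y, Φ x y := hΦm.lintegral_prod_right'
      obtain ⟨C, hCne, hCy⟩ := aux_ballpot N hK hKN (3 * R)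
      -- far bound
      set C2 : ℝ := rieszConst N α * 4 ^ K with hC2def
      have hC2 : 0 ≤ C2 := by positivity
      have far : ∀ x ∈ Metric.ball (0:EuclideanSpace ℝ (Fin N)) R, (∫⁻ y in (Metric.ball (0:EuclideanSpace ℝ (Fin N)) (2 * R))ᶜ, Φ x y)
          ≤ ENNReal.ofReal C2 * ∫⁻ y, ENNReal.ofReal (g y * (1 + ‖y‖) ^ (-K)) := by
        intro x hx
        have hxR : ‖x‖ < R := mem_ball_zero_iff.mp hx
        have hptwise : ∀ y ∈ (Metric.ball (0:EuclideanSpace ℝ (Fin N)) (2 * R))ᶜ,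
            Φ x y ≤ ENNReal.ofReal C2 * ENNReal.ofReal (g y * (1 + ‖y‖) ^ (-K)) := by
          intro y hy
          have hy2R : 2 * R ≤ ‖y‖ := by
            simpa [mem_ball_zero_iff, not_lt] using hy
          have h5 : (1 + ‖y‖) / 4 ≤ ‖x - y‖ := by
            have h6 : ‖y‖ - ‖x‖ ≤ ‖x - y‖ := by
              rw [norm_sub_rev]
              exact norm_sub_norm_le y x
            linarith
          have hden : (0:ℝ) < ((1 + ‖y‖) / 4) ^ K := by
            apply Real.rpow_pos_of_pos; positivity
          rw [hΦdef, ← ENNReal.ofReal_mul hC2]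
          apply ENNReal.ofReal_le_ofReal
          calc rieszConst N α * g y / ‖x - y‖ ^ K
              ≤ rieszConst N α * g y / ((1 + ‖y‖) / 4) ^ K := by
                apply div_le_div_of_nonneg_left (mul_nonneg hc.le (hg0 y)) hden
                exact Real.rpow_le_rpow (by positivity) h5 hK.le
            _ = C2 * (g y * (1 + ‖y‖) ^ (-K)) := by
                rw [hC2def, Real.div_rpow (by positivity) (by norm_num),
                  Real.rpow_neg (by positivity)]
                have h7 : ((1:ℝ) + ‖y‖) ^ K ≠ 0 := by positivity
                field_simp
        calc (∫⁻ y in (Metric.ball (0:EuclideanSpace ℝ (Fin N)) (2 * R))ᶜ, Φ x y)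
            ≤ ∫⁻ y in (Metric.ball (0:EuclideanSpace ℝ (Fin N)) (2 * R))ᶜ,
                ENNReal.ofReal C2 * ENNReal.ofReal (g y * (1 + ‖y‖) ^ (-K)) :=
              setLIntegral_mono' measurableSet_ball.compl hptwise
          _ ≤ ∫⁻ y, ENNReal.ofReal C2 * ENNReal.ofReal (g y * (1 + ‖y‖) ^ (-K)) :=
              setLIntegral_le_lintegral _ _
          _ = ENNReal.ofReal C2 * ∫⁻ y, ENNReal.ofReal (g y * (1 + ‖y‖) ^ (-K)) :=
              lintegral_const_mul' _ _ ENNReal.ofReal_ne_top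
      -- near bound
      have near : (∫⁻ x in Metric.ball (0:EuclideanSpace ℝ (Fin N)) R, ∫⁻ y in Metric.ball (0:EuclideanSpace ℝ (Fin N)) (2 * R), Φ x y) < ⊤ := by
        rw [lintegral_lintegral_swap (hΦm.aemeasurable)]
        have inner : ∀ y ∈ Metric.ball (0:EuclideanSpace ℝ (Fin N)) (2 * R),
            (∫⁻ x in Metric.ball (0:EuclideanSpace ℝ (Fin N)) R, Φ x y) ≤ ENNReal.ofReal (rieszConst N α * g y) * C := by
          intro y hy
          have hy2R : ‖y‖ < 2 * R := mem_ball_zero_iff.mp hy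
          have hsub : Metric.ball (0:EuclideanSpace ℝ (Fin N)) R ⊆ Metric.ball y (3 * R) := by
            intro x hx
            have hxR : ‖x‖ < R := mem_ball_zero_iff.mp hx
            rw [Metric.mem_ball, dist_eq_norm]
            calc ‖x - y‖ ≤ ‖x‖ + ‖y‖ := norm_sub_le _ _
              _ < 3 * R := by linarith
          have heq : ∀ x : EuclideanSpace ℝ (Fin N), Φ x y
              = ENNReal.ofReal (rieszConst N α * g y) * ENNReal.ofReal (1 / ‖x - y‖ ^ K) := by
            intro x
            simp only [hΦdef]
            rw [show rieszConst N α * g y / ‖x - y‖ ^ K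
                = rieszConst N α * g y * (1 / ‖x - y‖ ^ K) by ring,
              ENNReal.ofReal_mul (mul_nonneg hc.le (hg0 y))]
          calc (∫⁻ x in Metric.ball (0:EuclideanSpace ℝ (Fin N)) R, Φ x y)
              = ENNReal.ofReal (rieszConst N α * g y)
                * ∫⁻ x in Metric.ball (0:EuclideanSpace ℝ (Fin N)) R, ENNReal.ofReal (1 / ‖x - y‖ ^ K) := by
                simp_rw [heq]
                exact lintegral_const_mul' _ _ ENNReal.ofReal_ne_top
            _ ≤ ENNReal.ofReal (rieszConst N α * g y)
                * ∫⁻ x in Metric.ball y (3 * R), ENNReal.ofReal (1 / ‖x - y‖ ^ K) := by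
                gcongr
            _ ≤ ENNReal.ofReal (rieszConst N α * g y) * C := by gcongr; exact hCy y
        calc (∫⁻ y in Metric.ball (0:EuclideanSpace ℝ (Fin N)) (2 * R), ∫⁻ x in Metric.ball (0:EuclideanSpace ℝ (Fin N)) R, Φ x y)
            ≤ ∫⁻ y in Metric.ball (0:EuclideanSpace ℝ (Fin N)) (2 * R), ENNReal.ofReal (rieszConst N α * g y) * C :=
              setLIntegral_mono' measurableSet_ball inner
          _ = (∫⁻ y in Metric.ball (0:EuclideanSpace ℝ (Fin N)) (2 * R), ENNReal.ofReal (rieszConst N α * g y)) * C :=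
              lintegral_mul_const' _ _ hCne
          _ = (ENNReal.ofReal (rieszConst N α)
                * ∫⁻ y in Metric.ball (0:EuclideanSpace ℝ (Fin N)) (2 * R), ENNReal.ofReal (g y)) * C := by
              congr 1
              simp_rw [ENNReal.ofReal_mul hc.le]
              exact lintegral_const_mul' _ _ ENNReal.ofReal_ne_top
          _ < ⊤ := by
              apply ENNReal.mul_lt_top ?_ (lt_top_iff_ne_top.mpr hCne)
              apply ENNReal.mul_lt_top ENNReal.ofReal_lt_top
              refine lt_of_le_of_lt (lintegral_mono_set ball_subset_closedBall) (hloc 0 (2 * R))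
      -- combine
      have Afin : (∫⁻ x in Metric.ball (0:EuclideanSpace ℝ (Fin N)) R, ∫⁻ y, Φ x y) < ⊤ := by
        have hsplit : ∀ x : EuclideanSpace ℝ (Fin N), (∫⁻ y, Φ x y)
            = (∫⁻ y in Metric.ball (0:EuclideanSpace ℝ (Fin N)) (2 * R), Φ x y)
              + ∫⁻ y in (Metric.ball (0:EuclideanSpace ℝ (Fin N)) (2 * R))ᶜ, Φ x y :=
          fun x => (lintegral_add_compl _ measurableSet_ball).symm
        calc (∫⁻ x in Metric.ball (0:EuclideanSpace ℝ (Fin N)) R, ∫⁻ y, Φ x y)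
            ≤ ∫⁻ x in Metric.ball (0:EuclideanSpace ℝ (Fin N)) R,
                ((∫⁻ y in Metric.ball (0:EuclideanSpace ℝ (Fin N)) (2 * R), Φ x y)
                  + ENNReal.ofReal C2 * ∫⁻ y, ENNReal.ofReal (g y * (1 + ‖y‖) ^ (-K))) := by
              apply setLIntegral_mono' measurableSet_ball
              intro x hx
              rw [hsplit x]
              exact add_le_add le_rfl (far x hx)
          _ = (∫⁻ x in Metric.ball (0:EuclideanSpace ℝ (Fin N)) R, ∫⁻ y in Metric.ball (0:EuclideanSpace ℝ (Fin N)) (2 * R), Φ x y)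
              + (ENNReal.ofReal C2 * ∫⁻ y, ENNReal.ofReal (g y * (1 + ‖y‖) ^ (-K)))
                * volume (Metric.ball (0:EuclideanSpace ℝ (Fin N)) R) := by
              rw [lintegral_add_right _ measurable_const, setLIntegral_const]
          _ < ⊤ := by
              apply ENNReal.add_lt_top.mpr
              refine ⟨near, ENNReal.mul_lt_top ?_ measure_ball_lt_top⟩
              exact ENNReal.mul_lt_top ENNReal.ofReal_lt_top hJfin
      have hae := ae_lt_top hF Afin.ne
      rw [ae_restrict_iff' measurableSet_ball] at hae
      filter_upwards [hae] with x hx hxn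
      rw [hconv x]
      exact hx (Metric.ball_subset_ball (by rw [hRdef]; linarith) hxn)
    have hall := ae_all_iff.mpr key
    filter_upwards [hall] with x hx
    obtain ⟨n, hn⟩ := exists_nat_gt ‖x‖
    exact hx n (mem_ball_zero_iff.mpr hn)
  constructor
  · constructor
    · intro hae
      by_contra h
      have hJtop : (∫⁻ y, ENNReal.ofReal (g y * (1 + ‖y‖) ^ (-K))) = ⊤ := by
        rw [← hJ]
        simpa [lt_top_iff_ne_top, not_not] using h
      have htop := main2 hJtop
      have hfalse : ∀ᵐ x : EuclideanSpace ℝ (Fin N), False := hae.mono fun x hx => hx.ne (htop x)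
      have h0 : volume (univ : Set (EuclideanSpace ℝ (Fin N))) = 0 := by
        simpa using ae_iff.mp hfalse
      have hpos : 0 < volume (Metric.ball (0:EuclideanSpace ℝ (Fin N)) 1) := Metric.measure_ball_pos volume 0 one_pos
      have : volume (Metric.ball (0:EuclideanSpace ℝ (Fin N)) 1) = 0 :=
        le_antisymm (h0 ▸ measure_mono (subset_univ _)) zero_le
      exact hpos.ne' this
    · intro hfin
      exact main1 (by rwa [hJ] at hfin)
  · intro htop x
    exact main2 (by rwa [hJ] at htop) x
end
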